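/- arXiv:2002.10741 — 5 statements merged into one kernel-verified Lean document; each statement's English description precedes it below -/
import Mathlib

section
/- Let d and c be integers with 2 ≤ c < d, and let E = {X_{t(i)} X_{s(i)} : 1 ≤ i ≤ r} be a family of two-letter words given by pairwise distinct pairs with 1 ≤ s(i) ≤ c < t(i) ≤ d. Suppose i₀, j₀ are indices with 2 ≤ i₀ ≤ c < j₀ ≤ d such that (i₀, j₀) is not among the pairs (s(i), t(i)). Then the family E ∪ { X_{j₀} X_{i₀}^n X_1 : n ∈ ℤ_{>0} } (where X_{j₀} X_{i₀}^n X_1 denotes the word consisting of the letter X_{j₀}, followed by n copies of the letter X_{i₀}, followed by the letter X_1) is combinatorially free. -/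
/-- A family of pairwise distinct words (modelled as a set of words) is
*combinatorially free* if (i) no word of the family is a factor (submonomial) of
another word of the family, and (ii) for any two words `w, w'` of the family, no
nonempty proper suffix of `w` equals a nonempty proper prefix of `w'`. -/
def CombFreeSet {α : Type*} (F : Set (List α)) : Prop :=
  (∀ u ∈ F, ∀ w ∈ F, u ≠ w → ¬ u <:+: w) ∧
  (∀ w ∈ F, ∀ w' ∈ F, ∀ s : List α,
      s ≠ [] → s <:+ w → s ≠ w → s <+: w' → s ≠ w' → False)

/-!
Call the letters `X_j` with `j > c` high. Every word of the family begins with a high letter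
and has no other high letter. Hence a factor of such a word that is again such a word must
be a prefix of it, and a proper suffix can never be a prefix of another word. So everything
reduces to the family being prefix-free: two-letter words have equal length, `X_{t i} X_{s i}`
would be a prefix of `X_{j₀} X_{i₀}^m X_1` only if `(s i, t i) = (i₀, j₀)`, and since
`i₀ ≠ 1` the final `X_1` pins down the exponent `n` of `X_{j₀} X_{i₀}^n X_1`.
-/

namespace List

variable {α : Type*}

def HeadMarked (p : α → Prop) (w : List α) : Prop :=
  ∃ a tl, w = a :: tl ∧ p a ∧ ∀ x ∈ tl, ¬ p x

namespace HeadMarked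

variable {p : α → Prop} {u w w' s : List α}

theorem isPrefix_of_isInfix (hu : HeadMarked p u) (hw : HeadMarked p w) (h : u <:+: w) :
    u <+: w := by
  obtain ⟨a, tl, rfl, ha, -⟩ := hu
  obtain ⟨b, tl', rfl, -, htl'⟩ := hw
  obtain ⟨pre, post, hpre⟩ := h
  cases pre with
  | nil => exact ⟨post, by simpa using hpre⟩
  | cons x pre =>
    simp only [cons_append, cons.injEq] at hpre
    exact absurd ha (htl' a (by simp [← hpre.2]))

theorem not_suffix_prefix (hw : HeadMarked p w) (hw' : HeadMarked p w') (hs : s ≠ [])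
    (hsuf : s <:+ w) (hne : s ≠ w) (hpre : s <+: w') : False := by
  obtain ⟨a, tl, rfl, -, htl⟩ := hw
  obtain ⟨b, tl', rfl, hb, -⟩ := hw'
  obtain ⟨x, s, rfl⟩ := exists_cons_of_ne_nil hs
  have hsuf' : x :: s <:+ tl := (suffix_cons_iff.mp hsuf).resolve_left hne
  have hxb : x = b := (cons_prefix_cons.mp hpre).1
  exact htl x (hsuf'.subset mem_cons_self) (hxb ▸ hb)

end HeadMarked

theorem replicate_append_singleton_prefix_inj {a b : α} (hab : a ≠ b) {n m : ℕ}
    (h : replicate n a ++ [b] <+: replicate m a ++ [b]) : n = m := by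
  induction n generalizing m with
  | zero =>
    cases m with
    | zero => rfl
    | succ m => exact absurd (cons_prefix_cons.mp h).1 hab.symm
  | succ n ih =>
    cases m with
    | zero => exact absurd (cons_prefix_cons.mp h).1 hab
    | succ m => exact congrArg (· + 1) (ih (cons_prefix_cons.mp h).2)

end List

theorem CombFreeSet.of_prefixFree {α : Type*} {F : Set (List α)} (p : α → Prop)
    (hmarked : ∀ w ∈ F, w.HeadMarked p) (hprefix : ∀ u ∈ F, ∀ w ∈ F, u ≠ w → ¬ u <+: w) :
    CombFreeSet F :=
  ⟨fun u hu w hw hne hinf =>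
      hprefix u hu w hw hne ((hmarked u hu).isPrefix_of_isInfix (hmarked w hw) hinf),
    fun w hw w' hw' _ hs hsuf hne hpre _ =>
      (hmarked w hw).not_suffix_prefix (hmarked w' hw') hs hsuf hne hpre⟩

theorem stmt_1_general (d c r : ℕ)
    (s t : Fin r → ℕ)
    (hs : ∀ i, 1 ≤ s i ∧ s i ≤ c)
    (ht : ∀ i, c < t i ∧ t i ≤ d)
    (i₀ j₀ : ℕ) (hi₀ : 2 ≤ i₀ ∧ i₀ ≤ c) (hj₀ : c < j₀ ∧ j₀ ≤ d)
    (hnot : ∀ i : Fin r, (s i, t i) ≠ (i₀, j₀)) :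
    CombFreeSet ({w : List ℕ | ∃ i : Fin r, w = [t i, s i]} ∪
      {w : List ℕ | ∃ n : ℕ, 0 < n ∧ w = j₀ :: (List.replicate n i₀ ++ [1])}) := by
  refine CombFreeSet.of_prefixFree (c < ·) ?_ ?_
  · rintro w (⟨i, rfl⟩ | ⟨n, -, rfl⟩)
    · exact ⟨t i, [s i], rfl, (ht i).1, by simpa using (hs i).2⟩
    · refine ⟨j₀, _, rfl, hj₀.1, ?_⟩
      simp only [List.mem_append, List.mem_replicate, List.mem_singleton]
      omega
  · rintro u (⟨i, rfl⟩ | ⟨n, hn, rfl⟩) w (⟨j, rfl⟩ | ⟨m, hm, rfl⟩) hne hpre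
    · exact hne (hpre.eq_of_length rfl)
    · obtain ⟨m, rfl⟩ := Nat.exists_eq_add_of_lt hm
      simp only [zero_add, List.replicate_succ, List.cons_append, List.cons_prefix_cons,
        List.nil_prefix, and_true] at hpre
      exact hnot i (by simp [hpre])
    · have hlen := hpre.length_le
      simp only [List.length_cons, List.length_append, List.length_replicate] at hlen
      omega
    · have hn_eq := List.replicate_append_singleton_prefix_inj (show i₀ ≠ 1 by omega)
        (List.cons_prefix_cons.mp hpre).2
      exact hne (by rw [hn_eq])

/-- Let `2 ≤ c < d`, let `E = {X_{t i} X_{s i}}` be given by pairwise distinct pairs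
with `1 ≤ s i ≤ c < t i ≤ d`, and let `2 ≤ i₀ ≤ c < j₀ ≤ d` with `(i₀, j₀)` not among
the pairs `(s i, t i)`.  Then `E ∪ { X_{j₀} X_{i₀}^n X_1 : n ≥ 1 }` is combinatorially
free. -/
theorem stmt_1 (d c r : ℕ) (hc : 2 ≤ c) (hcd : c < d)
    (s t : Fin r → ℕ)
    (hs : ∀ i, 1 ≤ s i ∧ s i ≤ c)
    (ht : ∀ i, c < t i ∧ t i ≤ d)
    (hdist : Function.Injective fun i => (s i, t i))
    (i₀ j₀ : ℕ) (hi₀ : 2 ≤ i₀ ∧ i₀ ≤ c) (hj₀ : c < j₀ ∧ j₀ ≤ d)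
    (hnot : ∀ i : Fin r, (s i, t i) ≠ (i₀, j₀)) :
    CombFreeSet ({w : List ℕ | ∃ i : Fin r, w = [t i, s i]} ∪
      {w : List ℕ | ∃ n : ℕ, 0 < n ∧ w = j₀ :: (List.replicate n i₀ ++ [1])}) :=
  stmt_1_general d c r s t hs ht i₀ j₀ hi₀ hj₀ hnot
end

section
/- Let d and c be integers with 1 ≤ c < d, and let E = {X_{t(i)} X_{s(i)} : 1 ≤ i ≤ r} be a family of two-letter words given by pairwise distinct pairs with 1 ≤ s(i) ≤ c < t(i) ≤ d. Suppose i₀, j₀ are indices with 1 ≤ i₀ ≤ c < j₀ < d such that (i₀, j₀) is not among the pairs (s(i), t(i)). Then the family E ∪ { X_d X_{j₀}^n X_{i₀} : n ∈ ℤ_{>0} } (where X_d X_{j₀}^n X_{i₀} denotes the word consisting of the letter X_d, followed by n copies of the letter X_{j₀}, followed by the letter X_{i₀}) is combinatorially free. -/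
namespace List

variable {α : Type*}

def LowOnlyAtEnd (low : α → Prop) (w : List α) : Prop :=
  ∃ h x, w = h ++ [x] ∧ (∀ y ∈ h, ¬ low y) ∧ low x

variable {low : α → Prop} {u w w' σ : List α}

theorem LowOnlyAtEnd.isSuffix_of_isInfix (hu : LowOnlyAtEnd low u) (hw : LowOnlyAtEnd low w)
    (h : u <:+: w) : u <:+ w := by
  obtain ⟨h₁, x, rfl, -, hx⟩ := hu
  obtain ⟨h₂, x', rfl, hh₂, -⟩ := hw
  refine (infix_concat_iff.1 h).resolve_right fun hinf => hh₂ x ?_ hx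
  exact hinf.subset (mem_append_right _ (mem_singleton_self x))

theorem LowOnlyAtEnd.not_overlap (hw : LowOnlyAtEnd low w) (hw' : LowOnlyAtEnd low w')
    (hσ : σ ≠ []) (hsuf : σ <:+ w) (hpre : σ <+: w') (hne : σ ≠ w') : False := by
  obtain ⟨h, x, rfl, -, hx⟩ := hw
  obtain ⟨h', x', rfl, hh', -⟩ := hw'
  obtain ⟨t, rfl, -⟩ := (suffix_concat_iff.1 hsuf).resolve_left hσ
  have hpre' : t ++ [x] <+: h' := (prefix_concat_iff.1 hpre).resolve_left hne
  exact hh' x (hpre'.subset (mem_append_right _ (mem_singleton_self x))) hx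

theorem eq_of_cons_suffix_cons {x : α} {v : List α} (hx : x ∉ v) (h : x :: u <:+ x :: v) :
    u = v := by
  rcases suffix_cons_iff.1 h with h | h
  · exact (cons.inj h).2
  · exact absurd (h.subset (mem_cons_self ..)) hx

theorem pair_suffix_cons_replicate_append {a b d j i : α} {n : ℕ} (hn : 0 < n)
    (h : [a, b] <:+ d :: (replicate n j ++ [i])) : a = j ∧ b = i := by
  obtain ⟨m, rfl⟩ := Nat.exists_eq_add_one_of_ne_zero hn.ne'
  have hw : d :: (replicate (m + 1) j ++ [i]) = (d :: replicate m j) ++ [j, i] := by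
    simp [replicate_succ']
  rw [hw] at h
  have heq := (suffix_of_suffix_length_le h (suffix_append _ _) le_rfl).eq_of_length rfl
  simpa using heq

end List

open List

theorem CombFreeSet.of_lowOnlyAtEnd {α : Type*} {F : Set (List α)} (low : α → Prop)
    (hF : ∀ w ∈ F, LowOnlyAtEnd low w) (hsuf : ∀ u ∈ F, ∀ w ∈ F, u <:+ w → u = w) :
    CombFreeSet F :=
  ⟨fun u hu w hw hne h =>
      hne (hsuf u hu w hw ((hF u hu).isSuffix_of_isInfix (hF w hw) h)),
    fun w hw w' hw' _ hσ hs _ hp hne' => (hF w hw).not_overlap (hF w' hw') hσ hs hp hne'⟩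

theorem stmt_3_general (d c r : ℕ) (hcd : c < d)
    (s t : Fin r → ℕ)
    (hs : ∀ i, 1 ≤ s i ∧ s i ≤ c)
    (ht : ∀ i, c < t i ∧ t i ≤ d)
    (i₀ j₀ : ℕ) (hi₀ : 1 ≤ i₀ ∧ i₀ ≤ c) (hj₀ : c < j₀ ∧ j₀ < d)
    (hnot : ∀ i : Fin r, (s i, t i) ≠ (i₀, j₀)) :
    CombFreeSet ({w : List ℕ | ∃ i : Fin r, w = [t i, s i]} ∪
      {w : List ℕ | ∃ n : ℕ, 0 < n ∧ w = d :: (List.replicate n j₀ ++ [i₀])}) := by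
  apply CombFreeSet.of_lowOnlyAtEnd (· ≤ c)
  · rintro w (⟨i, rfl⟩ | ⟨n, -, rfl⟩)
    · exact ⟨[t i], s i, rfl, by simpa using (ht i).1, (hs i).2⟩
    · refine ⟨d :: replicate n j₀, i₀, rfl, ?_, hi₀.2⟩
      simp only [mem_cons, mem_replicate, not_le]
      rintro y (rfl | ⟨-, rfl⟩) <;> omega
  · rintro u (⟨i, rfl⟩ | ⟨n, hn, rfl⟩) w (⟨j, rfl⟩ | ⟨m, hm, rfl⟩) h
    · exact h.eq_of_length rfl
    · obtain ⟨rfl, rfl⟩ := pair_suffix_cons_replicate_append hm h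
      exact absurd rfl (hnot i)
    · have := h.length_le
      simp only [length_cons, length_append, length_replicate] at this
      omega
    · have hd : d ∉ replicate m j₀ ++ [i₀] := by
        simp only [mem_append, mem_replicate, mem_singleton]
        omega
      rw [eq_of_cons_suffix_cons hd h]

/-- Let `1 ≤ c < d`, let `E = {X_{t i} X_{s i}}` be given by pairwise distinct pairs
with `1 ≤ s i ≤ c < t i ≤ d`, and let `1 ≤ i₀ ≤ c < j₀ < d` with `(i₀, j₀)` not among
the pairs `(s i, t i)`.  Then `E ∪ { X_d X_{j₀}^n X_{i₀} : n ≥ 1 }` is combinatorially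
free. -/
theorem stmt_3 (d c r : ℕ) (hc : 1 ≤ c) (hcd : c < d)
    (s t : Fin r → ℕ)
    (hs : ∀ i, 1 ≤ s i ∧ s i ≤ c)
    (ht : ∀ i, c < t i ∧ t i ≤ d)
    (hdist : Function.Injective fun i => (s i, t i))
    (i₀ j₀ : ℕ) (hi₀ : 1 ≤ i₀ ∧ i₀ ≤ c) (hj₀ : c < j₀ ∧ j₀ < d)
    (hnot : ∀ i : Fin r, (s i, t i) ≠ (i₀, j₀)) :
    CombFreeSet ({w : List ℕ | ∃ i : Fin r, w = [t i, s i]} ∪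
      {w : List ℕ | ∃ n : ℕ, 0 < n ∧ w = d :: (List.replicate n j₀ ++ [i₀])}) :=
  stmt_3_general d c r hcd s t hs ht i₀ j₀ hi₀ hj₀ hnot
end

section
/- Let p be a prime, let A = 𝔽_p⟨X_1,…,X_5⟩ be the free noncommutative polynomial algebra on 5 generators, let (a_n)_{n≥1} be a strictly increasing sequence of positive integers, and let C be the two-sided ideal of A generated by the monomials X_5X_3, X_4X_2, X_4X_3, X_5X_2, X_5X_1 and X_5 X_4^{a_n} X_1 for all n ≥ 1. Setting b_n = dim_{𝔽_p}(A^{(n)}/(C ∩ A^{(n)})), the identity (∑_{n≥0} b_n t^n) · (1 − 5t + 5t² + ∑_{n≥1} t^{a_n + 2}) = 1 holds in the ring of formal power series ℤ⟦t⟧ (the coefficient of t^k in ∑_{n≥1} t^{a_n+2} being the number of n with a_n + 2 = k, which is 0 or 1). -/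
/-!
Since `C` is generated by monomials, it is spanned by the words having a factor in the set `F`
of generating words, so `b_n` counts the words of length `n` avoiding `F`. Appending a letter to
an avoiding word `u` yields either a nonempty avoiding word or a word `v f` with `v` avoiding and
`f ∈ F`, and the latter decomposition is unique because `F` is suffix-free. Conversely every
`v f` arises this way: the letters of `f` other than the last are `X_4, X_5`, and appending those
to an avoiding word keeps it avoiding, since every word of `F` ends in `X_1`, `X_2` or `X_3`.
With `W(t)` and `F(t)` the length generating series this reads `5t W = (W - 1) + W F`, and
`F(t) = 5t² + ∑ t^{a_n + 2}` because the `X_5 X_4^{a_n} X_1` are pairwise distinct and longer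
than the five quadratic words.
-/

noncomputable section

/-- Words in the letters `X_1, …, X_5`: elements of the free monoid on `5` letters,
the letter `X_i` being encoded by `(i - 1 : Fin 5)`. -/
abbrev Word5 := FreeMonoid (Fin 5)

/-- The free noncommutative polynomial algebra `A = 𝔽_p⟨X_1, …, X_5⟩`, modelled as
the monoid algebra over `ZMod p` of the free monoid on `5` letters. -/
abbrev FA (p : ℕ) := MonoidAlgebra (ZMod p) Word5

/-- The monomial of `A` corresponding to a word, e.g. `mono p [4, 2] = X_5 * X_3`. -/
def mono (p : ℕ) (l : List (Fin 5)) : FA p :=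
  MonoidAlgebra.single (FreeMonoid.ofList l) 1

/-- The homogeneous component `A^{(n)}`: the `𝔽_p`-span of the monomials (words) of
degree `n`. -/
def homComponent (p n : ℕ) : Submodule (ZMod p) (FA p) :=
  Submodule.span (ZMod p)
    {x | ∃ w : Word5, (FreeMonoid.toList w).length = n ∧ x = MonoidAlgebra.single w 1}

/-- The two-sided ideal of `A` generated by a set `G`: the `𝔽_p`-span of all products
`a * g * b` with `g ∈ G`. -/
def twoSidedSpan (p : ℕ) (G : Set (FA p)) : Submodule (ZMod p) (FA p) :=
  Submodule.span (ZMod p) {x | ∃ a g b : FA p, g ∈ G ∧ x = a * g * b}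

/-- `dim_{𝔽_p} (A^{(n)} / (C ∩ A^{(n)}))`. -/
def bcoef (p : ℕ) (C : Submodule (ZMod p) (FA p)) (n : ℕ) : ℕ :=
  Module.finrank (ZMod p)
    (↥(homComponent p n) ⧸ (C.comap (homComponent p n).subtype))

open PowerSeries

section Words

variable {α : Type*}

def avoiding (F : Set (List α)) : Set (List α) := {w | ∀ f ∈ F, ¬ f <:+: w}

def lengthSeries (S : Set (List α)) : ℤ⟦X⟧ :=
  PowerSeries.mk fun n => ({w ∈ S | w.length = n}.ncard : ℤ)

section LengthSeries

variable {S T : Set (List α)}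

lemma lengthSeries_of_forall_length_eq {d : ℕ} (h : ∀ w ∈ S, w.length = d) :
    lengthSeries S = (S.ncard : ℤ⟦X⟧) * X ^ d := by
  ext n
  rw [lengthSeries, coeff_mk, ← map_natCast (C : ℤ →+* ℤ⟦X⟧), coeff_C_mul_X_pow]
  split_ifs with hn
  · subst hn
    congr
    exact Set.sep_eq_self_iff_mem_true.2 h
  · rw [Set.sep_eq_empty_iff_mem_false.2 fun w hw (hwn : w.length = n) => hn (hwn ▸ h w hw)]
    simp

lemma lengthSeries_nil : lengthSeries {([] : List α)} = 1 := by
  rw [lengthSeries_of_forall_length_eq (d := 0) (by simp), Set.ncard_singleton]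
  simp

lemma lengthSeries_range_singleton :
    lengthSeries (Set.range fun x : α => [x]) = (Nat.card α : ℤ⟦X⟧) * X := by
  rw [lengthSeries_of_forall_length_eq (d := 1) (by rintro _ ⟨x, rfl⟩; rfl),
    Set.ncard_range_of_injective List.singleton_injective, pow_one]

lemma append_injOn_prod_range_singleton (S : Set (List α)) :
    Set.InjOn (fun p : List α × List α => p.1 ++ p.2) (S ×ˢ Set.range fun x : α => [x]) := by
  rintro ⟨u, l⟩ ⟨-, x, rfl⟩ ⟨u', l'⟩ ⟨-, x', rfl⟩ (h : u ++ [x] = u' ++ [x'])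
  obtain ⟨rfl, hx⟩ := List.append_inj' h rfl
  exact congrArg (Prod.mk u) hx

lemma append_injOn_prod_of_suffix {F : Set (List α)} (hsuf : ∀ f ∈ F, ∀ g ∈ F, f <:+ g → f = g) :
    Set.InjOn (fun p : List α × List α => p.1 ++ p.2) (S ×ˢ F) := by
  rintro ⟨v, f⟩ ⟨-, hf⟩ ⟨v', f'⟩ ⟨-, hf'⟩ (h : v ++ f = v' ++ f')
  obtain rfl : f = f' := by
    rcases List.suffix_or_suffix_of_suffix (List.suffix_append v f)
        (h ▸ List.suffix_append v' f') with hs | hs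
    · exact hsuf f hf f' hf' hs
    · exact (hsuf f' hf' f hf hs).symm
  rw [List.append_cancel_right h]

variable [Finite α]

lemma finite_sep_length_eq (S : Set (List α)) (n : ℕ) : {w ∈ S | w.length = n}.Finite :=
  (List.finite_length_eq α n).subset fun _ hw => hw.2

lemma lengthSeries_union (h : Disjoint S T) :
    lengthSeries (S ∪ T) = lengthSeries S + lengthSeries T := by
  ext n
  have hsplit : {w ∈ S ∪ T | w.length = n} = {w ∈ S | w.length = n} ∪ {w ∈ T | w.length = n} :=
    Set.sep_union
  rw [lengthSeries, lengthSeries, lengthSeries, map_add, coeff_mk, coeff_mk, coeff_mk, hsplit,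
    Set.ncard_union_eq (h.mono (Set.sep_subset _ _) (Set.sep_subset _ _)) (finite_sep_length_eq S n)
      (finite_sep_length_eq T n), Nat.cast_add]

open Finset in
lemma lengthSeries_image2_append
    (h : Set.InjOn (fun p : List α × List α => p.1 ++ p.2) (S ×ˢ T)) :
    lengthSeries (Set.image2 (· ++ ·) S T) = lengthSeries S * lengthSeries T := by
  ext n
  have himage : {w ∈ Set.image2 (· ++ ·) S T | w.length = n} =
      (fun p : List α × List α => p.1 ++ p.2) '' {p ∈ S ×ˢ T | p.1.length + p.2.length = n} := by
    ext w
    simp only [Set.mem_ofPred_eq, Set.mem_image2, Set.mem_image, Set.mem_prod, Prod.exists]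
    constructor
    · rintro ⟨⟨u, hu, v, hv, rfl⟩, rfl⟩
      exact ⟨u, v, ⟨⟨hu, hv⟩, List.length_append.symm⟩, rfl⟩
    · rintro ⟨u, v, ⟨⟨hu, hv⟩, hn⟩, rfl⟩
      exact ⟨⟨u, hu, v, hv, rfl⟩, by simpa using hn⟩
  have hfiber : {p ∈ S ×ˢ T | p.1.length + p.2.length = n} =
      ⋃ ij ∈ (antidiagonal n : Set (ℕ × ℕ)),
        {w ∈ S | w.length = ij.1} ×ˢ {w ∈ T | w.length = ij.2} := by
    ext ⟨u, v⟩
    simp only [Set.mem_ofPred_eq, Set.mem_prod, Set.mem_iUnion, Finset.mem_coe,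
      Finset.HasAntidiagonal.mem_antidiagonal, exists_prop, Prod.exists]
    constructor
    · rintro ⟨⟨hu, hv⟩, hn⟩
      exact ⟨_, _, hn, ⟨hu, rfl⟩, hv, rfl⟩
    · rintro ⟨i, j, hn, ⟨hu, rfl⟩, hv, rfl⟩
      exact ⟨⟨hu, hv⟩, hn⟩
  rw [lengthSeries, coeff_mk, himage, (h.mono (Set.sep_subset _ _)).ncard_image, hfiber,
    (antidiagonal n).finite_toSet.ncard_biUnion
      (fun ij _ => (finite_sep_length_eq S ij.1).prod (finite_sep_length_eq T ij.2)),
    finsum_mem_coe_finset, coeff_mul, Nat.cast_sum]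
  · simp only [Set.ncard_prod, Nat.cast_mul, lengthSeries, coeff_mk]
  · rintro ⟨i, j⟩ hij ⟨i', j'⟩ hij' hne
    simp only [Finset.mem_coe, Finset.HasAntidiagonal.mem_antidiagonal] at hij hij'
    refine Set.disjoint_left.2 fun ⟨u, v⟩ h₁ h₂ => hne ?_
    simp only [Set.mem_prod, Set.mem_ofPred_eq] at h₁ h₂
    ext <;> simp only <;> omega

end LengthSeries

section Avoiding

variable {F : Set (List α)} {u v w : List α}

lemma mem_avoiding_of_infix (hw : w ∈ avoiding F) (h : u <:+: w) : u ∈ avoiding F :=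
  fun f hf hfu => hw f hf (hfu.trans h)

lemma append_notMem_avoiding {f : List α} (hf : f ∈ F) : v ++ f ∉ avoiding F :=
  fun h => h f hf (List.suffix_append v f).isInfix

lemma nil_mem_avoiding (hnil : [] ∉ F) : [] ∈ avoiding F :=
  fun _ hf hfnil => hnil (List.eq_nil_of_infix_nil hfnil ▸ hf)

lemma append_mem_avoiding (hv : v ∈ avoiding F)
    (hu : ∀ f ∈ F, ∀ x ∈ u, f.getLast? ≠ some x) : v ++ u ∈ avoiding F := by
  induction u generalizing v with
  | nil => simpa using hv
  | cons x u ih =>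
    have hvx : v ++ [x] ∈ avoiding F := by
      intro f hf hfvx
      rcases List.infix_concat_iff.1 hfvx with hsuf | hinf
      · rcases List.suffix_concat_iff.1 hsuf with rfl | ⟨t, rfl, -⟩
        · exact hv [] hf List.nil_infix
        · exact hu _ hf x List.mem_cons_self (by simp)
      · exact hv f hf hinf
    simpa using ih hvx fun f hf y hy => hu f hf y (List.mem_cons_of_mem x hy)

lemma image2_append_avoiding_range_singleton (hnil : [] ∉ F)
    (hext : ∀ f ∈ F, ∀ v ∈ avoiding F, v ++ f.dropLast ∈ avoiding F) :
    Set.image2 (· ++ ·) (avoiding F) (Set.range fun x : α => [x]) =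
      avoiding F \ {[]} ∪ Set.image2 (· ++ ·) (avoiding F) F := by
  ext w
  constructor
  · rintro ⟨u, hu, _, ⟨x, rfl⟩, rfl⟩
    by_cases hux : u ++ [x] ∈ avoiding F
    · exact Or.inl ⟨hux, by simp⟩
    · obtain ⟨f, hf, hfux⟩ : ∃ f ∈ F, f <:+: u ++ [x] := by
        simpa [avoiding] using hux
      rcases List.infix_concat_iff.1 hfux with hsuf | hinf
      · rcases List.suffix_concat_iff.1 hsuf with rfl | ⟨t, rfl, v, rfl⟩
        · exact absurd hf hnil
        · exact Or.inr ⟨v, mem_avoiding_of_infix hu (List.prefix_append v t).isInfix, _, hf,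
            by simp⟩
      · exact absurd hinf (hu f hf)
  · rintro (⟨hw, hne : w ≠ []⟩ | ⟨v, hv, f, hf, rfl⟩)
    · refine ⟨w.dropLast, mem_avoiding_of_infix hw (List.dropLast_prefix w).isInfix, _,
        ⟨w.getLast hne, rfl⟩, List.dropLast_append_getLast hne⟩
    · have hne : f ≠ [] := fun h => hnil (h ▸ hf)
      refine ⟨v ++ f.dropLast, hext f hf v hv, _, ⟨f.getLast hne, rfl⟩, ?_⟩
      simp only [List.append_assoc, List.dropLast_append_getLast hne]

end Avoiding

theorem lengthSeries_avoiding_mul_eq_one [Finite α] {F : Set (List α)} (hnil : [] ∉ F)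
    (hsuf : ∀ f ∈ F, ∀ g ∈ F, f <:+ g → f = g)
    (hext : ∀ f ∈ F, ∀ v ∈ avoiding F, v ++ f.dropLast ∈ avoiding F) :
    lengthSeries (avoiding F) * (1 - (Nat.card α : ℤ⟦X⟧) * X + lengthSeries F) = 1 := by
  have hdisj : Disjoint (avoiding F \ {[]}) (Set.image2 (· ++ ·) (avoiding F) F) :=
    Set.disjoint_left.2 fun _ hw ⟨_, _, _, hf, hvf⟩ => append_notMem_avoiding hf (hvf ▸ hw.1)
  have hnil_split : lengthSeries (avoiding F \ {[]}) + 1 = lengthSeries (avoiding F) := by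
    rw [← lengthSeries_nil, ← lengthSeries_union Set.disjoint_sdiff_left,
      Set.sdiff_union_of_subset (Set.singleton_subset_iff.2 (nil_mem_avoiding hnil))]
  have key := congrArg lengthSeries (image2_append_avoiding_range_singleton hnil hext)
  rw [lengthSeries_image2_append (append_injOn_prod_range_singleton _),
    lengthSeries_range_singleton, lengthSeries_union hdisj,
    lengthSeries_image2_append (append_injOn_prod_of_suffix hsuf)] at key
  linear_combination -key - hnil_split

end Words

def shortWords : Set (List (Fin 5)) := {[4, 2], [3, 1], [3, 2], [4, 1], [4, 0]}

def longWord (a : ℕ → ℕ) (n : ℕ) : List (Fin 5) := 4 :: (List.replicate (a n) 3 ++ [0])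

def forbiddenWords (a : ℕ → ℕ) : Set (List (Fin 5)) := shortWords ∪ Set.range (longWord a)

section ForbiddenWords

variable {a : ℕ → ℕ} {f g : List (Fin 5)}

lemma length_of_mem_shortWords (hf : f ∈ shortWords) : f.length = 2 := by
  simp only [shortWords, Set.mem_insert_iff, Set.mem_singleton_iff] at hf
  rcases hf with rfl | rfl | rfl | rfl | rfl <;> rfl

lemma ncard_shortWords : shortWords.ncard = 5 := by
  rw [shortWords, Set.ncard_eq_toFinset_card']
  rfl

lemma longWord_eq_concat (n : ℕ) : longWord a n = (4 :: List.replicate (a n) 3) ++ [0] := rfl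

lemma length_longWord (n : ℕ) : (longWord a n).length = a n + 2 := by
  simp [longWord]

lemma longWord_injective (ha : Function.Injective a) : Function.Injective (longWord a) :=
  fun m n h => ha (by simpa [length_longWord] using congrArg List.length h)

lemma two_le_length_of_mem_forbiddenWords (hf : f ∈ forbiddenWords a) : 2 ≤ f.length := by
  rcases hf with hf | ⟨n, rfl⟩
  · exact (length_of_mem_shortWords hf).ge
  · simp [length_longWord]

lemma exists_mem_ne_of_mem_forbiddenWords (hf : f ∈ forbiddenWords a) :
    ∃ x ∈ f, x ≠ 3 ∧ x ≠ 0 := by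
  rcases hf with hf | ⟨n, rfl⟩
  · simp only [shortWords, Set.mem_insert_iff, Set.mem_singleton_iff] at hf
    rcases hf with rfl | rfl | rfl | rfl | rfl <;> decide
  · exact ⟨4, List.mem_cons_self, by decide, by decide⟩

lemma getLast?_lt_of_mem_forbiddenWords (hf : f ∈ forbiddenWords a) {x : Fin 5}
    (hx : f.getLast? = some x) : x < 3 := by
  rcases hf with hf | ⟨n, rfl⟩
  · simp only [shortWords, Set.mem_insert_iff, Set.mem_singleton_iff] at hf
    rcases hf with rfl | rfl | rfl | rfl | rfl <;> cases hx <;> decide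
  · rw [longWord_eq_concat, List.getLast?_concat, Option.some_inj] at hx
    exact hx ▸ by decide

lemma le_of_mem_dropLast_of_mem_forbiddenWords (hf : f ∈ forbiddenWords a) {x : Fin 5}
    (hx : x ∈ f.dropLast) : 3 ≤ x := by
  rcases hf with hf | ⟨n, rfl⟩
  · simp only [shortWords, Set.mem_insert_iff, Set.mem_singleton_iff] at hf
    rcases hf with rfl | rfl | rfl | rfl | rfl <;> simp at hx <;> subst hx <;> decide
  · rw [longWord_eq_concat, List.dropLast_concat] at hx
    rcases List.mem_cons.1 hx with rfl | hx
    · decide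
    · exact (List.eq_of_mem_replicate hx).ge

lemma nil_notMem_forbiddenWords : [] ∉ forbiddenWords a :=
  fun h => by simpa using two_le_length_of_mem_forbiddenWords h

lemma append_dropLast_mem_avoiding_forbiddenWords {v : List (Fin 5)}
    (hf : f ∈ forbiddenWords a) (hv : v ∈ avoiding (forbiddenWords a)) :
    v ++ f.dropLast ∈ avoiding (forbiddenWords a) :=
  append_mem_avoiding hv fun _ hg _ hx hlast =>
    (le_of_mem_dropLast_of_mem_forbiddenWords hf hx).not_gt
      (getLast?_lt_of_mem_forbiddenWords hg hlast)

lemma eq_of_suffix_of_mem_forbiddenWords (hf : f ∈ forbiddenWords a)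
    (hg : g ∈ forbiddenWords a) (hfg : f <:+ g) : f = g := by
  rcases hg with hg | ⟨n, rfl⟩
  · exact hfg.eq_of_length_le
      ((length_of_mem_shortWords hg).trans_le (two_le_length_of_mem_forbiddenWords hf))
  · rcases List.suffix_cons_iff.1 hfg with h | h
    · exact h
    · obtain ⟨x, hx, hx3, hx0⟩ := exists_mem_ne_of_mem_forbiddenWords hf
      have := h.subset hx
      simp_all

lemma lengthSeries_forbiddenWords (hpos : ∀ n, 0 < a n) (ha : Function.Injective a) :
    lengthSeries (forbiddenWords a) =
      5 * X ^ 2 + PowerSeries.mk fun k => (Set.ncard {n : ℕ | a n + 2 = k} : ℤ) := by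
  have hdisj : Disjoint shortWords (Set.range (longWord a)) := by
    refine Set.disjoint_right.2 ?_
    rintro _ ⟨n, rfl⟩ hn
    have := length_of_mem_shortWords hn
    rw [length_longWord] at this
    exact (hpos n).ne' (by omega)
  have hlong : lengthSeries (Set.range (longWord a)) =
      PowerSeries.mk fun k => (Set.ncard {n : ℕ | a n + 2 = k} : ℤ) := by
    ext k
    rw [lengthSeries, coeff_mk, coeff_mk, ← Set.ncard_image_of_injective _ (longWord_injective ha)]
    congr 2
    ext w
    constructor
    · rintro ⟨⟨n, rfl⟩, rfl⟩
      exact ⟨n, (length_longWord n).symm, rfl⟩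
    · rintro ⟨n, hn, rfl⟩
      exact ⟨⟨n, rfl⟩, (length_longWord n).trans hn⟩
  rw [forbiddenWords, lengthSeries_union hdisj,
    lengthSeries_of_forall_length_eq fun _ => length_of_mem_shortWords, ncard_shortWords, hlong,
    Nat.cast_ofNat]

end ForbiddenWords

section SupportedQuotient

open MonoidAlgebra

variable {K M : Type*} [Field K]

lemma finrank_supported {t : Set M} (ht : t.Finite) :
    Module.finrank K (supported K K t) = t.ncard := by
  have := ht.fintype
  rw [(supportedEquivFinsupp t).finrank_eq, Module.finrank_finsupp_self,
    ← Nat.card_eq_fintype_card, Nat.card_coe_set_eq]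

lemma finrank_quotient_comap_supported {s t : Set M} (ht : t.Finite) :
    Module.finrank K
      (supported K K t ⧸ (supported K K s).comap (supported K K t).subtype) = (t \ s).ncard := by
  have := ht.fintype
  have : Module.Finite K (supported K K t) := Module.Finite.equiv (supportedEquivFinsupp t).symm
  have hinter : supported K K t ⊓ supported K K s = supported K K (t ∩ s) := by
    ext x
    simp only [Submodule.mem_inf, mem_supported, Set.subset_inter_iff]
  have hcomap : Module.finrank K ((supported K K s).comap (supported K K t).subtype) =
      (t ∩ s).ncard := by
    rw [← Submodule.finrank_map_subtype_eq, Submodule.map_comap_subtype, hinter,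
      finrank_supported (ht.inter_of_left s)]
  have hsplit := Submodule.finrank_quotient_add_finrank
    ((supported K K s).comap (supported K K t).subtype)
  rw [hcomap, finrank_supported ht, ← Set.ncard_inter_add_ncard_sdiff_eq_ncard t s ht] at hsplit
  omega

end SupportedQuotient

section MonomialIdeal

open MonoidAlgebra

variable (p : ℕ)

lemma homComponent_eq_supported (n : ℕ) :
    homComponent p n = supported (ZMod p) (ZMod p) {w : Word5 | w.toList.length = n} := by
  rw [homComponent, supported_eq_span_single]
  congr 1
  ext x
  simp only [Set.mem_image, Set.mem_ofPred_eq, eq_comm (a := x)]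

lemma twoSidedSpan_image_mono (F : Set (List (Fin 5))) :
    twoSidedSpan p (mono p '' F) =
      supported (ZMod p) (ZMod p) (FreeMonoid.toList ⁻¹' (avoiding F)ᶜ) := by
  classical
  apply le_antisymm
  · refine Submodule.span_le.2 ?_
    rintro _ ⟨x, _, y, ⟨f, hf, rfl⟩, rfl⟩ w hw
    obtain ⟨u, hu, v, -, rfl⟩ := Finset.mem_mul.1 (support_coeff_mul_subset _ y hw)
    obtain ⟨s, -, t, ht, rfl⟩ := Finset.mem_mul.1 (support_coeff_mul_subset x _ hu)
    rw [Finset.mem_singleton.1 (Finsupp.support_single_subset ht)]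
    exact fun hw' => hw' f hf ⟨s.toList, v.toList, by simp⟩
  · rw [supported_eq_span_single]
    refine Submodule.span_le.2 ?_
    rintro _ ⟨w, hw, rfl⟩
    obtain ⟨f, hf, s, t, hst⟩ : ∃ f ∈ F, f <:+: w.toList := by simpa [avoiding] using hw
    refine Submodule.subset_span ⟨single (FreeMonoid.ofList s) 1, mono p f,
      single (FreeMonoid.ofList t) 1, ⟨f, hf, rfl⟩, ?_⟩
    rw [mono, single_mul_single, single_mul_single, one_mul, one_mul]
    congr
    apply FreeMonoid.toList.injective
    simp [← hst]

lemma bcoef_twoSidedSpan_image_mono (hp : p.Prime) (F : Set (List (Fin 5))) (n : ℕ) :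
    bcoef p (twoSidedSpan p (mono p '' F)) n = {w ∈ avoiding F | w.length = n}.ncard := by
  have := Fact.mk hp
  have hfin : {w : Word5 | w.toList.length = n}.Finite :=
    (List.finite_length_eq (Fin 5) n).preimage FreeMonoid.toList.injective.injOn
  rw [bcoef, homComponent_eq_supported, twoSidedSpan_image_mono,
    finrank_quotient_comap_supported hfin, ← Set.ncard_preimage_of_injective_subset_range
      FreeMonoid.toList.injective (FreeMonoid.toList.range_eq_univ ▸ Set.subset_univ _)]
  congr 1
  ext w
  simp [and_comm]

end MonomialIdeal

lemma generators_eq_image_mono (p : ℕ) (a : ℕ → ℕ) :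
    (({mono p [4, 2], mono p [3, 1], mono p [3, 2], mono p [4, 1], mono p [4, 0]} : Set (FA p)) ∪
      {x | ∃ n : ℕ, x = mono p (4 :: (List.replicate (a n) 3 ++ [0]))}) =
      mono p '' forbiddenWords a := by
  rw [forbiddenWords, Set.image_union, shortWords]
  simp only [Set.image_insert_eq, Set.image_singleton]
  congr 1
  ext x
  simp [longWord, eq_comm]

/-- (Example 1.6, Poincaré series.)  Let `(a_n)` be a strictly increasing sequence of
positive integers and let `C` be the two-sided ideal of `A = 𝔽_p⟨X_1, …, X_5⟩`
generated by `X_5X_3, X_4X_2, X_4X_3, X_5X_2, X_5X_1` and `X_5 X_4^{a_n} X_1` for all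
`n`.  With `b n = dim_{𝔽_p}(A^{(n)}/(C ∩ A^{(n)}))`, one has
`(∑ b_n t^n) · (1 − 5t + 5t² + ∑_n t^{a_n + 2}) = 1` in `ℤ⟦t⟧`, the coefficient of
`t^k` in `∑_n t^{a_n + 2}` being the number (0 or 1) of `n` with `a_n + 2 = k`. -/
theorem stmt_6 (p : ℕ) (hp : p.Prime)
    (a : ℕ → ℕ) (hpos : ∀ n, 0 < a n) (hmono : StrictMono a) :
    (PowerSeries.mk fun n =>
        (bcoef p (twoSidedSpan p
          (({mono p [4, 2], mono p [3, 1], mono p [3, 2], mono p [4, 1], mono p [4, 0]} :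
              Set (FA p)) ∪
            {x | ∃ n : ℕ, x = mono p (4 :: (List.replicate (a n) 3 ++ [0]))})) n : ℤ)) *
      (1 - 5 * PowerSeries.X + 5 * PowerSeries.X ^ 2 +
        PowerSeries.mk fun k => (Set.ncard {n : ℕ | a n + 2 = k} : ℤ)) = 1 := by
  have hseries : (PowerSeries.mk fun n =>
      (bcoef p (twoSidedSpan p (mono p '' forbiddenWords a)) n : ℤ)) =
      lengthSeries (avoiding (forbiddenWords a)) := by
    ext n
    rw [coeff_mk, bcoef_twoSidedSpan_image_mono p hp, lengthSeries, coeff_mk]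
  have key := lengthSeries_avoiding_mul_eq_one (nil_notMem_forbiddenWords (a := a))
    (fun _ hf _ hg => eq_of_suffix_of_mem_forbiddenWords hf hg)
    (fun _ hf _ hv => append_dropLast_mem_avoiding_forbiddenWords hf hv)
  rw [lengthSeries_forbiddenWords hpos hmono.injective, Nat.card_fin] at key
  rw [generators_eq_image_mono, hseries]
  linear_combination key
end
end

section
/- Let d ≥ 1 and let F be a locally finite combinatorially free family of words over the alphabet {X_1,…,X_d} (locally finite meaning: for each k, only finitely many words of F have length k). For n ≥ 0 let c_n be the number of words of length n over {X_1,…,X_d} having no factor belonging to F, and for k ≥ 1 let r_k be the number of words of F of length k. Then (∑_{n≥0} c_n t^n) · (1 − d·t + ∑_{k≥1} r_k t^k) = 1 in the ring of formal power series ℤ⟦t⟧. -/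
open List Finset

variable {α : Type*}

theorem infix_append_or_straddles {u x y : List α} (h : u <:+: x ++ y) :
    u <:+: x ∨ u <:+: y ∨ ∃ s p, s ≠ [] ∧ p ≠ [] ∧ u = s ++ p ∧ s <:+ x ∧ p <+: y := by
  obtain ⟨a, b, hab⟩ := h
  rw [List.append_assoc] at hab
  rcases append_eq_append_iff.mp hab with ⟨s, rfl, hs⟩ | ⟨c, rfl, rfl⟩
  · rcases append_eq_append_iff.mp hs with ⟨t, rfl, -⟩ | ⟨p, rfl, rfl⟩
    · exact .inl ⟨a, t, by simp⟩
    · rcases eq_or_ne s [] with rfl | hs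
      · exact .inr (.inl (prefix_append p b).isInfix)
      rcases eq_or_ne p [] with rfl | hp
      · exact .inl ⟨a, [], by simp⟩
      · exact .inr (.inr ⟨s, p, hs, hp, rfl, suffix_append a s, prefix_append p b⟩)
  · exact .inr (.inl ⟨c, b, by simp⟩)

def Avoids (F : Set (List α)) (w : List α) : Prop := ∀ u ∈ F, ¬ u <:+: w

variable {F : Set (List α)}

theorem Avoids.of_infix {v w : List α} (hw : Avoids F w) (h : v <:+: w) : Avoids F v :=
  fun u hu huv => hw u hu (huv.trans h)

theorem avoids_nil (hne : ∀ w ∈ F, w ≠ []) : Avoids F [] :=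
  fun u hu h => hne u hu (eq_nil_of_infix_nil h)

theorem List.IsInfix.isPrefix_of_avoids_tail {u w : List α} (hu : u ∈ F) (h : u <:+: w)
    (hw : Avoids F w.tail) : u <+: w := by
  obtain ⟨_ | ⟨x, a⟩, b, rfl⟩ := h
  · exact prefix_append u b
  · exact absurd (infix_append a u b) (hw u hu)

namespace CombFreeSet

theorem eq_of_prefix (hcf : CombFreeSet F) {w f f' : List α} (hf : f ∈ F) (hf' : f' ∈ F)
    (h : f <+: w) (h' : f' <+: w) : f = f' := by
  by_contra hne
  rcases le_total f.length f'.length with hl | hl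
  · exact hcf.1 f hf f' hf' hne (prefix_of_prefix_length_le h h' hl).isInfix
  · exact hcf.1 f' hf' f hf (Ne.symm hne) (prefix_of_prefix_length_le h' h hl).isInfix

theorem avoids_tail_append (hcf : CombFreeSet F) {f v : List α} (hf : f ∈ F)
    (hv : Avoids F v) : Avoids F (f ++ v).tail := by
  obtain _ | ⟨a, f⟩ := f
  · exact absurd nil_infix (hv [] hf)
  intro u hu h
  have shorter {s : List α} (hs : s <:+: f) : s ≠ a :: f := by
    rintro rfl
    simpa using hs.length_le
  rcases infix_append_or_straddles h with h | h | ⟨s, p, hs, hp, rfl, hsf, hpv⟩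
  · exact hcf.1 u hu _ hf (shorter h) (h.trans (suffix_cons a f).isInfix)
  · exact hv u hu h
  · refine hcf.2 _ hf _ hu s hs (hsf.trans (suffix_cons a f)) (shorter hsf.isInfix)
      (prefix_append s p) ?_
    simpa using hp

end CombFreeSet

def avoiders (F : Set (List α)) (n : ℕ) : Set (List α) := {w | w.length = n ∧ Avoids F w}

def tailAvoiders (F : Set (List α)) (n : ℕ) : Set (List α) :=
  {w | w.length = n + 1 ∧ Avoids F w.tail}

def ofLength (F : Set (List α)) (k : ℕ) : Set (List α) := {w ∈ F | w.length = k}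

theorem ofLength_zero (hne : ∀ w ∈ F, w ≠ []) : ofLength F 0 = ∅ :=
  Set.eq_empty_iff_forall_notMem.mpr fun w ⟨hw, hlen⟩ => hne w hw (length_eq_zero_iff.mp hlen)

theorem avoiders_zero (hne : ∀ w ∈ F, w ≠ []) : avoiders F 0 = {[]} := by
  ext w
  simp only [avoiders, Set.mem_ofPred_eq, Set.mem_singleton_iff, length_eq_zero_iff]
  exact ⟨And.left, fun hw => ⟨hw, hw ▸ avoids_nil hne⟩⟩

theorem ncard_tailAvoiders (n : ℕ) :
    (tailAvoiders F n).ncard = Nat.card α * (avoiders F n).ncard := by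
  have : tailAvoiders F n = (fun x : α × List α => x.1 :: x.2) '' (Set.univ ×ˢ avoiders F n) := by
    ext (_ | ⟨a, v⟩)
    · simp [tailAvoiders]
    · simp [tailAvoiders, avoiders]
  rw [this, Set.InjOn.ncard_image, Set.ncard_prod, Set.ncard_univ]
  rintro ⟨a, v⟩ - ⟨b, w⟩ - h
  simpa using h

theorem tailAvoiders_inter_avoids (n : ℕ) :
    tailAvoiders F n ∩ {w | Avoids F w} = avoiders F (n + 1) := by
  ext w
  simp only [tailAvoiders, avoiders, Set.mem_inter_iff, Set.mem_ofPred_eq]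
  exact ⟨fun ⟨⟨hl, _⟩, hw⟩ => ⟨hl, hw⟩,
    fun ⟨hl, hw⟩ => ⟨⟨hl, hw.of_infix (tail_suffix w).isInfix⟩, hw⟩⟩

theorem CombFreeSet.tailAvoiders_diff_avoids (hcf : CombFreeSet F) (n : ℕ) :
    tailAvoiders F n \ {w | Avoids F w} = ⋃ p ∈ antidiagonal (n + 1),
      (fun x : List α × List α => x.1 ++ x.2) '' (ofLength F p.1 ×ˢ avoiders F p.2) := by
  ext w
  simp only [tailAvoiders, avoiders, ofLength, Set.mem_sdiff, Set.mem_ofPred_eq, Set.mem_iUnion,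
    Set.mem_image, Set.mem_prod, Finset.HasAntidiagonal.mem_antidiagonal, Prod.exists, exists_prop]
  constructor
  · rintro ⟨⟨hlen, htail⟩, hbad⟩
    obtain ⟨f, hf, hfw⟩ : ∃ f ∈ F, f <:+: w := by
      by_contra! h
      exact hbad h
    obtain ⟨v, rfl⟩ := hfw.isPrefix_of_avoids_tail hf htail
    have hv : Avoids F v := by
      obtain _ | ⟨a, f⟩ := f
      · exact absurd nil_infix (htail [] hf)
      · exact htail.of_infix (suffix_append f v).isInfix
    exact ⟨f.length, v.length, by simpa using hlen, f, v, ⟨⟨hf, rfl⟩, rfl, hv⟩, rfl⟩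
  · rintro ⟨i, j, hij, f, v, ⟨⟨hf, rfl⟩, rfl, hv⟩, rfl⟩
    exact ⟨⟨by simpa using hij, hcf.avoids_tail_append hf hv⟩,
      fun h => h f hf (prefix_append f v).isInfix⟩

theorem CombFreeSet.ncard_biUnion_append [Finite α] (hcf : CombFreeSet F) (n : ℕ) :
    (⋃ p ∈ antidiagonal n,
      (fun x : List α × List α => x.1 ++ x.2) '' (ofLength F p.1 ×ˢ avoiders F p.2)).ncard =
      ∑ p ∈ antidiagonal n, (ofLength F p.1).ncard * (avoiders F p.2).ncard := by
  have hinj (p : ℕ × ℕ) :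
      Set.InjOn (fun x : List α × List α => x.1 ++ x.2) (ofLength F p.1 ×ˢ avoiders F p.2) := by
    rintro ⟨f, v⟩ ⟨⟨-, hf⟩, -⟩ ⟨f', v'⟩ ⟨⟨-, hf'⟩, -⟩ h
    obtain ⟨rfl, rfl⟩ := append_inj h (hf.trans hf'.symm)
    rfl
  rw [← Finset.set_biUnion_coe, (antidiagonal n).finite_toSet.ncard_biUnion,
    finsum_mem_coe_finset]
  · exact Finset.sum_congr rfl fun p _ => by rw [(hinj p).ncard_image, Set.ncard_prod]
  · intro p _
    refine (Set.Finite.prod ?_ ?_).image _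
    · exact (List.finite_length_eq α p.1).subset fun w hw => hw.2
    · exact (List.finite_length_eq α p.2).subset fun w hw => hw.1
  · rintro p hp q hq hpq
    refine Set.disjoint_left.mpr ?_
    rintro _ ⟨⟨f, v⟩, ⟨⟨hf, hfp : f.length = p.1⟩, -⟩, rfl⟩
      ⟨⟨f', v'⟩, ⟨⟨hf', hfq : f'.length = q.1⟩, -⟩, h : f' ++ v' = f ++ v⟩
    obtain rfl := hcf.eq_of_prefix hf' hf (h ▸ prefix_append f' v') (prefix_append f v)
    rw [Finset.mem_coe, Finset.HasAntidiagonal.mem_antidiagonal] at hp hq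
    have hpq₁ : p.1 = q.1 := hfp.symm.trans hfq
    exact hpq (Prod.ext hpq₁ (by omega))

theorem CombFreeSet.card_mul_ncard_avoiders [Finite α] (hcf : CombFreeSet F) (n : ℕ) :
    Nat.card α * (avoiders F n).ncard = (avoiders F (n + 1)).ncard +
      ∑ p ∈ antidiagonal (n + 1), (ofLength F p.1).ncard * (avoiders F p.2).ncard := by
  have hfin : (tailAvoiders F n).Finite :=
    (List.finite_length_eq α (n + 1)).subset fun w hw => hw.1
  rw [← ncard_tailAvoiders, ← Set.ncard_inter_add_ncard_sdiff_eq_ncard _ {w | Avoids F w} hfin,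
    tailAvoiders_inter_avoids, hcf.tailAvoiders_diff_avoids, hcf.ncard_biUnion_append]

theorem PowerSeries.mk_mul_one_sub_C_mul_X_add_mk_eq_one {R : Type*} [CommRing R]
    {c r : ℕ → R} {d : R} (hc : c 0 = 1) (hr : r 0 = 0)
    (hrec : ∀ n, d * c n = c (n + 1) + ∑ p ∈ antidiagonal (n + 1), r p.1 * c p.2) :
    mk c * (1 - C d * X + mk r) = 1 := by
  ext (_ | n)
  · simp [hc, hr]
  · rw [show mk c * (1 - C d * X + mk r) = mk c - C d * (mk c * X) + mk r * mk c by ring,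
      map_add, map_sub, coeff_C_mul, coeff_succ_mul_X, coeff_mul, coeff_one,
      if_neg n.succ_ne_zero]
    simp only [coeff_mk]
    linear_combination (hrec n).symm

theorem stmt_12_general (d : ℕ) (F : Set (List (Fin d)))
    (hne : ∀ w ∈ F, w ≠ [])
    (hcf : CombFreeSet F) :
    (PowerSeries.mk fun n =>
        (Set.ncard {w : List (Fin d) | w.length = n ∧ ∀ u ∈ F, ¬ u <:+: w} : ℤ)) *
      (1 - PowerSeries.C (d : ℤ) * PowerSeries.X +
        PowerSeries.mk fun k =>
          if k = 0 then 0 else (Set.ncard {w ∈ F | w.length = k} : ℤ)) = 1 := by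
  have hr0 : ((ofLength F 0).ncard : ℤ) = 0 := by simp [ofLength_zero hne]
  have key := PowerSeries.mk_mul_one_sub_C_mul_X_add_mk_eq_one
    (c := fun n => ((avoiders F n).ncard : ℤ)) (r := fun k => ((ofLength F k).ncard : ℤ))
    (d := d) (by simp [avoiders_zero hne]) hr0
    fun n => by exact_mod_cast Nat.card_fin d ▸ hcf.card_mul_ncard_avoiders n
  convert key using 4
  · rfl
  funext k
  split_ifs with hk
  · exact hk ▸ hr0.symm
  · rfl

/-- (Combinatorial content of Anick's theorem.)  Let `F` be a locally finite
combinatorially free family of (nonempty) words over a `d`-letter alphabet.  Let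
`c n` be the number of words of length `n` having no factor in `F`, and `r k` the
number of words of `F` of length `k`.  Then
`(∑ c_n t^n) · (1 − d t + ∑_{k ≥ 1} r_k t^k) = 1` in `ℤ⟦t⟧`. -/
theorem stmt_12 (d : ℕ) (hd : 1 ≤ d) (F : Set (List (Fin d)))
    (hne : ∀ w ∈ F, w ≠ [])
    (hlf : ∀ k : ℕ, {w ∈ F | w.length = k}.Finite)
    (hcf : CombFreeSet F) :
    (PowerSeries.mk fun n =>
        (Set.ncard {w : List (Fin d) | w.length = n ∧ ∀ u ∈ F, ¬ u <:+: w} : ℤ)) *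
      (1 - PowerSeries.C (d : ℤ) * PowerSeries.X +
        PowerSeries.mk fun k =>
          if k = 0 then 0 else (Set.ncard {w ∈ F | w.length = k} : ℤ)) = 1 :=
  stmt_12_general d F hne hcf
end

section
/- Let p be a prime, A = 𝔽_p⟨X_1,…,X_5⟩, and let C be the two-sided ideal of A generated by the monomials X_5X_1, X_5X_2, X_4X_3, X_4X_2, X_5X_3 and X_5 X_4^n X_1 for all n ∈ ℤ_{>0}. Setting b_n = dim_{𝔽_p}(A^{(n)}/(C ∩ A^{(n)})), the identity (∑_{n≥0} b_n t^n) · (1 − 5t + 5t² + ∑_{k≥3} t^k) = 1 holds in ℤ⟦t⟧; equivalently, the Poincaré series of A/C equals (1 − 5t + 5t² + t³(1 + t + t² + ⋯))^{−1}. -/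
noncomputable section

/-!
A basis of `A/C` is given by the normal words: those with no factor among the obstructions `G`,
so `b_n` counts normal words of length `n`. If `G` is an antichain for the factor order and no two
of its words overlap, then appending a letter to a normal word either keeps it normal or creates
exactly one obstruction, necessarily as a suffix, and what precedes that suffix is again normal.
With `N` the normal words this is the identity of languages `N·X ∪ {ε} = N ∪ N·G`, where both
unions are disjoint and both products unambiguous; for length series it reads
`P·d t + 1 = P + P·G(t)`, i.e. `P · (1 - d t + G(t)) = 1` (Anick's formula without 2-chains).
Here `d = 5` and `G(t) = 5t² + t³ + t⁴ + ⋯`; the obstructions cannot overlap because each ends in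
one of `X_1, X_2, X_3` and contains no other such letter.
-/

namespace MonomialAlgebra

open PowerSeries Finset

variable {α : Type*}

/-- `ncard` is `0` on infinite sets, but every length slice is finite when `α` is. -/
def lengthSeries (S : Set (List α)) : PowerSeries ℤ :=
  PowerSeries.mk fun n => ({w ∈ S | w.length = n}.ncard : ℤ)

lemma lengthSeries_singleton_nil : lengthSeries ({[]} : Set (List α)) = 1 := by
  ext n
  rcases n with _ | n
  · simp [lengthSeries]
  · have : {w ∈ ({[]} : Set (List α)) | w.length = n + 1} = ∅ :=
      Set.sep_eq_empty_iff_mem_false.mpr fun _ hw h => by simp [Set.mem_singleton_iff.mp hw] at h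
    rw [lengthSeries, coeff_mk, this, Set.ncard_empty, coeff_one, if_neg n.succ_ne_zero,
      Nat.cast_zero]

lemma lengthSeries_range_singleton :
    lengthSeries (Set.range fun a : α => [a]) = (Nat.card α : PowerSeries ℤ) * X := by
  ext n
  have hsep : {w ∈ Set.range fun a : α => [a] | w.length = n} =
      if n = 1 then Set.range fun a : α => [a] else ∅ := by
    split_ifs with hn
    · exact Set.sep_eq_self_iff_mem_true.mpr fun _ ⟨_, hw⟩ => hw ▸ hn.symm
    · exact Set.sep_eq_empty_iff_mem_false.mpr fun _ ⟨_, hw⟩ h => hn (hw ▸ h).symm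
  rw [lengthSeries, coeff_mk, hsep, ← map_natCast (C (R := ℤ)), coeff_C_mul, coeff_X]
  split_ifs <;> simp [Set.ncard_range_of_injective List.singleton_injective]

lemma lengthSeries_of_forall_length_eq {S : Set (List α)} {k : ℕ} (hS : ∀ w ∈ S, w.length = k) :
    lengthSeries S = (S.ncard : PowerSeries ℤ) * X ^ k := by
  ext n
  rw [lengthSeries, coeff_mk, ← map_natCast (C (R := ℤ)), coeff_C_mul_X_pow]
  split_ifs with hn
  · rw [Set.sep_eq_self_iff_mem_true.mpr fun w hw => (hS w hw).trans hn.symm]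
  · rw [Set.sep_eq_empty_iff_mem_false.mpr fun w hw (h : w.length = n) =>
      hn (h.symm.trans (hS w hw)), Set.ncard_empty, Nat.cast_zero]

lemma lengthSeries_range_of_length_eq_add {f : ℕ → List α} {m : ℕ}
    (hf : ∀ n, (f n).length = n + m) :
    lengthSeries (Set.range f) = PowerSeries.mk fun k => if m ≤ k then 1 else 0 := by
  ext k
  rw [lengthSeries, coeff_mk, coeff_mk]
  split_ifs with hk
  · have : {w ∈ Set.range f | w.length = k} = {f (k - m)} := by
      ext w
      simp only [Set.mem_range, Set.mem_singleton_iff]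
      constructor
      · rintro ⟨⟨n, rfl⟩, hn⟩
        rw [hf] at hn
        rw [← hn, Nat.add_sub_cancel]
      · rintro rfl
        exact ⟨⟨_, rfl⟩, by rw [hf]; omega⟩
    rw [this, Set.ncard_singleton, Nat.cast_one]
  · rw [Set.sep_eq_empty_iff_mem_false.mpr ?_, Set.ncard_empty, Nat.cast_zero]
    rintro _ ⟨n, rfl⟩ hn
    rw [hf] at hn
    omega

lemma sep_image2_append_length_eq (S T : Set (List α)) (n : ℕ) :
    {w ∈ Set.image2 (· ++ ·) S T | w.length = n} =
      (fun x : List α × List α => x.1 ++ x.2) ''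
        ⋃ ij ∈ (antidiagonal n : Set (ℕ × ℕ)),
          {u ∈ S | u.length = ij.1} ×ˢ {v ∈ T | v.length = ij.2} := by
  ext w
  simp only [Set.mem_sep_iff, Set.mem_image2, Set.mem_image, Set.mem_iUnion, Set.mem_prod,
    Finset.mem_coe, exists_prop, Prod.exists]
  constructor
  · rintro ⟨⟨u, hu, v, hv, rfl⟩, hn⟩
    exact ⟨u, v, ⟨_, _, by simpa using hn, ⟨hu, rfl⟩, hv, rfl⟩, rfl⟩
  · rintro ⟨u, v, ⟨i, j, hij, ⟨hu, rfl⟩, hv, rfl⟩, rfl⟩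
    exact ⟨⟨u, hu, v, hv, rfl⟩, by simpa using hij⟩

section Finite

variable [Finite α]

lemma finite_sep_length_eq (S : Set (List α)) (n : ℕ) : {w ∈ S | w.length = n}.Finite :=
  (List.finite_length_eq α n).subset fun _ hw => hw.2

lemma lengthSeries_union {S T : Set (List α)} (h : Disjoint S T) :
    lengthSeries (S ∪ T) = lengthSeries S + lengthSeries T := by
  ext n
  have hsep : {w ∈ S ∪ T | w.length = n} = {w ∈ S | w.length = n} ∪ {w ∈ T | w.length = n} :=
    Set.sep_union
  simp only [lengthSeries, coeff_mk, map_add]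
  rw [hsep, Set.ncard_union_eq (h.mono (Set.sep_subset _ _) (Set.sep_subset _ _))
    (finite_sep_length_eq S n) (finite_sep_length_eq T n), Nat.cast_add]

lemma lengthSeries_image2_append {S T : Set (List α)}
    (h : Set.InjOn (fun x : List α × List α => x.1 ++ x.2) (S ×ˢ T)) :
    lengthSeries (Set.image2 (· ++ ·) S T) = lengthSeries S * lengthSeries T := by
  ext n
  simp only [lengthSeries, coeff_mk, coeff_mul]
  rw [sep_image2_append_length_eq, Set.InjOn.ncard_image, Set.Finite.ncard_biUnion,
    finsum_mem_coe_finset]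
  · push_cast
    exact Finset.sum_congr rfl fun ij _ => by rw [Set.ncard_prod, Nat.cast_mul]
  · exact (antidiagonal n).finite_toSet
  · exact fun ij _ => (finite_sep_length_eq S _).prod (finite_sep_length_eq T _)
  · exact fun ij _ kl _ hne => Set.disjoint_left.mpr fun x hx hx' =>
      hne (Prod.ext (hx.1.2.symm.trans hx'.1.2) (hx.2.2.symm.trans hx'.2.2))
  · refine h.mono ?_
    simp only [Set.iUnion_subset_iff]
    exact fun ij _ => Set.prod_mono (Set.sep_subset _ _) (Set.sep_subset _ _)

end Finite

def Avoids (G : Set (List α)) (w : List α) : Prop := ∀ g ∈ G, ¬ g <:+: w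

def IsFactorAntichain (G : Set (List α)) : Prop := ∀ g ∈ G, ∀ h ∈ G, g <:+: h → g = h

def HasNoOverlaps (G : Set (List α)) : Prop :=
  ∀ x y z : List α, x ≠ [] → y ≠ [] → z ≠ [] → x ++ y ∈ G → y ++ z ∉ G

section NormalWords

variable {G : Set (List α)}

lemma Avoids.of_infix {v w : List α} (hw : Avoids G w) (h : v <:+: w) : Avoids G v :=
  fun g hg hv => hw g hg (hv.trans h)

lemma avoids_nil (hnil : [] ∉ G) : Avoids G [] :=
  fun _ hg h => hnil (List.eq_nil_of_infix_nil h ▸ hg)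

lemma not_avoids_append {u g : List α} (hg : g ∈ G) : ¬ Avoids G (u ++ g) :=
  fun h => h g hg List.infix_append_right

lemma Avoids.append_of_append_mem (hred : IsFactorAntichain G) (hov : HasNoOverlaps G)
    {u g z : List α} (hu : Avoids G u) (hg : g ++ z ∈ G) (hz : z ≠ []) : Avoids G (u ++ g) := by
  intro h hh hinf
  rcases List.infix_append_iff_ne_nil.mp hinf with hu' | hg' | ⟨x, y, hx, hy, rfl, -, t, rfl⟩
  · exact hu h hh hu'
  · have hlen := (hred h hh _ hg (hg'.trans List.infix_append_left) ▸ hg').length_le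
    simp [hz] at hlen
  · exact hov x y (t ++ z) hx hy (by simp [hz]) hh (by rwa [← List.append_assoc])

lemma image2_append_range_singleton_union (hnil : [] ∉ G) (hred : IsFactorAntichain G)
    (hov : HasNoOverlaps G) :
    Set.image2 (· ++ ·) {w | Avoids G w} (Set.range fun a : α => [a]) ∪ {[]} =
      {w | Avoids G w} ∪ Set.image2 (· ++ ·) {w | Avoids G w} G := by
  ext w
  constructor
  · rintro (⟨u, hu, _, ⟨a, rfl⟩, rfl⟩ | rfl)
    · by_cases hw : Avoids G (u ++ [a])
      · exact Or.inl hw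
      obtain ⟨g, hg, hgw⟩ : ∃ g ∈ G, g <:+: u ++ [a] := by simpa [Avoids] using hw
      obtain ⟨s, hsg⟩ := (List.infix_concat_iff.mp hgw).resolve_right (hu g hg)
      have hs : s <+: u := (List.prefix_concat_iff.mp ⟨g, hsg⟩).resolve_left fun h => by
        simp_all
      exact Or.inr ⟨s, hu.of_infix hs.isInfix, g, hg, hsg⟩
    · exact Or.inl (avoids_nil hnil)
  · rintro (hw | ⟨u, hu, g, hg, rfl⟩)
    · rcases w.eq_nil_or_concat' with rfl | ⟨u, a, rfl⟩
      · exact Or.inr rfl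
      · exact Or.inl ⟨u, hw.of_infix List.infix_append_left, [a], ⟨a, rfl⟩, rfl⟩
    · rcases g.eq_nil_or_concat' with rfl | ⟨g, a, rfl⟩
      · exact absurd hg hnil
      · exact Or.inl ⟨u ++ g, hu.append_of_append_mem hred hov hg (List.cons_ne_nil a []),
          [a], ⟨a, rfl⟩, by simp⟩

theorem lengthSeries_avoids_mul [Finite α] (hnil : [] ∉ G) (hred : IsFactorAntichain G)
    (hov : HasNoOverlaps G) :
    lengthSeries {w | Avoids G w} * (1 - (Nat.card α : PowerSeries ℤ) * X + lengthSeries G) =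
      1 := by
  have key := congrArg lengthSeries (image2_append_range_singleton_union hnil hred hov)
  rw [lengthSeries_union, lengthSeries_union, lengthSeries_image2_append,
    lengthSeries_image2_append, lengthSeries_range_singleton, lengthSeries_singleton_nil] at key
  · linear_combination -key
  · rintro ⟨u, g⟩ ⟨hu, hg⟩ ⟨u', g'⟩ ⟨hu', hg'⟩ h
    have hgg' : g = g' := by
      rcases List.suffix_or_suffix_of_suffix ⟨u, rfl⟩ ⟨u', h.symm⟩ with hs | hs
      · exact hred g hg g' hg' hs.isInfix
      · exact (hred g' hg' g hg hs.isInfix).symm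
    subst hgg'
    exact Prod.ext (List.append_cancel_right h) rfl
  · rintro ⟨u, _⟩ ⟨-, a, rfl⟩ ⟨u', _⟩ ⟨-, a', rfl⟩ h
    obtain ⟨rfl, h⟩ := List.append_inj' h rfl
    simp_all
  · exact Set.disjoint_left.mpr fun w hw ⟨u, _, g, hg, huv⟩ => not_avoids_append hg (huv ▸ hw)
  · exact Set.disjoint_left.mpr fun w ⟨u, _, a, _, huv⟩ hw => by simp_all

end NormalWords

section EndMarked

variable {G : Set (List α)}

def IsEndMarked (E : Set α) (G : Set (List α)) : Prop :=
  ∀ g ∈ G, ∃ g' e, g = g' ++ [e] ∧ e ∈ E ∧ ∀ c ∈ g', c ∉ E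

lemma IsEndMarked.hasNoOverlaps {E : Set α} (hG : IsEndMarked E G) : HasNoOverlaps G := by
  intro x y z _ hy hz hxy hyz
  obtain ⟨h', e, hh, he, -⟩ := hG _ hxy
  obtain ⟨g', _, hg, _, hg'⟩ := hG _ hyz
  obtain ⟨y, c, rfl⟩ := y.eq_nil_or_concat'.resolve_left hy
  obtain ⟨z, _, rfl⟩ := z.eq_nil_or_concat'.resolve_left hz
  rw [← List.append_assoc] at hh hg
  have hce : [c] = [e] := (List.append_inj' hh rfl).2
  have hg'z : y ++ [c] ++ z = g' := (List.append_inj' hg rfl).1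
  exact hg' c (hg'z ▸ by simp) (List.singleton_inj.mp hce ▸ he)

lemma IsEndMarked.isSuffix_of_isInfix {E : Set α} (hG : IsEndMarked E G) {g h : List α}
    (hg : g ∈ G) (hh : h ∈ G) (hgh : g <:+: h) : g <:+ h := by
  obtain ⟨g', e, rfl, he, -⟩ := hG g hg
  obtain ⟨h', _, rfl, _, hh'⟩ := hG h hh
  rcases List.infix_concat_iff.mp hgh with hs | hi
  · exact hs
  · exact absurd he (hh' e (hi.subset (by simp)))

end EndMarked

def obstructions : Set (List (Fin 5)) :=
  {[4, 0], [4, 1], [3, 2], [3, 1], [4, 2]} ∪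
    Set.range fun n => 4 :: (List.replicate (n + 1) 3 ++ [0])

lemma length_of_mem_quadratic {g : List (Fin 5)}
    (hg : g ∈ ({[4, 0], [4, 1], [3, 2], [3, 1], [4, 2]} : Set (List (Fin 5)))) :
    g.length = 2 := by
  rcases hg with rfl | rfl | rfl | rfl | rfl <;> rfl

lemma nil_notMem_obstructions : [] ∉ obstructions := by
  rintro (h | ⟨n, h⟩)
  · simpa using length_of_mem_quadratic h
  · simp at h

lemma isEndMarked_obstructions : IsEndMarked {c | c.val ≤ 2} obstructions := by
  rintro g ((rfl | rfl | rfl | rfl | rfl) | ⟨n, rfl⟩)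
  all_goals first
    | exact ⟨[_], _, rfl, by decide, by decide⟩
    | exact ⟨4 :: List.replicate (n + 1) 3, 0, by simp, by decide, by simp [List.mem_replicate]⟩

lemma isFactorAntichain_obstructions : IsFactorAntichain obstructions := by
  intro g hg h hh hgh
  have hs := isEndMarked_obstructions.isSuffix_of_isInfix hg hh hgh
  rcases hh with hh | ⟨n, rfl⟩
  · refine hs.eq_of_length_le ?_
    rw [length_of_mem_quadratic hh]
    rcases hg with hg | ⟨m, rfl⟩
    · rw [length_of_mem_quadratic hg]
    · simp
  · -- a proper suffix of `X_5 X_4^(n+1) X_1` only uses the letters `X_4, X_1`; no obstruction does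
    refine (List.suffix_cons_iff.mp hs).resolve_right fun hs' => ?_
    have hsub := hs'.subset
    rcases hg with (rfl | rfl | rfl | rfl | rfl) | ⟨m, rfl⟩ <;>
      simp [List.cons_subset, List.mem_replicate] at hsub

lemma lengthSeries_obstructions :
    lengthSeries obstructions = 5 * X ^ 2 + PowerSeries.mk fun k => if 3 ≤ k then 1 else 0 := by
  rw [obstructions, lengthSeries_union, lengthSeries_of_forall_length_eq
    fun _ => length_of_mem_quadratic, lengthSeries_range_of_length_eq_add (m := 3) (by simp)]
  · congr
    simp [Set.ncard_insert_of_notMem]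
  · refine Set.disjoint_left.mpr fun g hg ⟨n, hn⟩ => ?_
    have := length_of_mem_quadratic hg
    simp [← hn] at this

lemma image_mono_obstructions (p : ℕ) :
    mono p '' obstructions =
      ({mono p [4, 0], mono p [4, 1], mono p [3, 2], mono p [3, 1], mono p [4, 2]} :
          Set (FA p)) ∪
        {x | ∃ n : ℕ, 0 < n ∧ x = mono p (4 :: (List.replicate n 3 ++ [0]))} := by
  simp only [obstructions, Set.image_union, Set.image_insert_eq, Set.image_singleton]
  congr 1
  ext x
  constructor
  · rintro ⟨_, ⟨n, rfl⟩, rfl⟩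
    exact ⟨n + 1, n.succ_pos, rfl⟩
  · rintro ⟨n, hn, rfl⟩
    exact ⟨_, ⟨n - 1, by simp only [Nat.sub_add_cancel hn]⟩, rfl⟩

section LinearAlgebra

variable (p : ℕ)

abbrev coeffs : FA p ≃ₗ[ZMod p] (Word5 →₀ ZMod p) := MonoidAlgebra.coeffLinearEquiv (ZMod p)

lemma homComponent_eq_comap_supported (n : ℕ) :
    homComponent p n =
      (Finsupp.supported (ZMod p) (ZMod p) {w : Word5 | w.toList.length = n}).comap
        (coeffs p).toLinearMap := by
  rw [Submodule.comap_equiv_eq_map_symm, Finsupp.supported_eq_span_single, Submodule.map_span,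
    homComponent]
  congr 1
  ext x
  constructor
  · rintro ⟨w, hw, rfl⟩
    exact ⟨_, ⟨w, hw, rfl⟩, rfl⟩
  · rintro ⟨_, ⟨w, hw, rfl⟩, rfl⟩
    exact ⟨w, hw, rfl⟩

open scoped Pointwise in
lemma twoSidedSpan_image_mono_eq_comap_supported (G : Set (List (Fin 5))) :
    twoSidedSpan p (mono p '' G) =
      (Finsupp.supported (ZMod p) (ZMod p) {w : Word5 | ¬ Avoids G w.toList}).comap
        (coeffs p).toLinearMap := by
  classical
  apply le_antisymm
  · rw [twoSidedSpan, Submodule.span_le]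
    rintro _ ⟨a, _, b, ⟨g, hg, rfl⟩, rfl⟩ w hw
    have hsupp : (a * mono p g * b).coeff.support ⊆
        a.coeff.support * {FreeMonoid.ofList g} * b.coeff.support :=
      (MonoidAlgebra.support_coeff_mul_subset _ _).trans
        (Finset.mul_subset_mul_right ((MonoidAlgebra.support_coeff_mul_subset a _).trans
          (Finset.mul_subset_mul_left Finsupp.support_single_subset)))
    obtain ⟨_, hu, v, -, rfl⟩ := Finset.mem_mul.mp (hsupp hw)
    obtain ⟨u, -, _, hg', rfl⟩ := Finset.mem_mul.mp hu
    rw [Finset.mem_singleton.mp hg']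
    exact fun h => h g hg ⟨u.toList, v.toList, by simp⟩
  · rw [Submodule.comap_equiv_eq_map_symm, Finsupp.supported_eq_span_single,
      Submodule.map_span, Submodule.span_le]
    rintro _ ⟨_, ⟨w, hw, rfl⟩, rfl⟩
    obtain ⟨g, hg, s, t, hst⟩ : ∃ g ∈ G, g <:+: w.toList := by simpa [Avoids] using hw
    refine Submodule.subset_span ⟨MonoidAlgebra.single (FreeMonoid.ofList s) 1, mono p g,
      MonoidAlgebra.single (FreeMonoid.ofList t) 1, ⟨g, hg, rfl⟩, ?_⟩
    simp only [mono, MonoidAlgebra.single_mul_single, one_mul, ← FreeMonoid.ofList_append, hst,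
      FreeMonoid.ofList_toList]
    rfl

lemma mem_twoSidedSpan_image_mono_iff (G : Set (List (Fin 5))) (x : FA p) :
    x ∈ twoSidedSpan p (mono p '' G) ↔ ∀ w : Word5, Avoids G w.toList → x.coeff w = 0 := by
  rw [twoSidedSpan_image_mono_eq_comap_supported, Submodule.mem_comap, Finsupp.mem_supported']
  simp

lemma coeff_eq_zero_of_mem_homComponent {n : ℕ} {x : FA p} (hx : x ∈ homComponent p n)
    {w : Word5} (hw : w.toList.length ≠ n) : x.coeff w = 0 := by
  rw [homComponent_eq_comap_supported, Submodule.mem_comap, Finsupp.mem_supported'] at hx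
  exact hx w hw

lemma bcoef_twoSidedSpan_image_mono [Nontrivial (ZMod p)] (G : Set (List (Fin 5))) (n : ℕ) :
    bcoef p (twoSidedSpan p (mono p '' G)) n = {w ∈ {w | Avoids G w} | w.length = n}.ncard := by
  set S : Set Word5 := {w | Avoids G w.toList ∧ w.toList.length = n}
  have hS : S.Finite := (List.finite_length_eq (Fin 5) n).preimage
    (FreeMonoid.toList.injective.injOn) |>.subset fun _ hw => hw.2
  have : Fintype S := hS.fintype
  let φ : homComponent p n →ₗ[ZMod p] (S →₀ ZMod p) :=
    Finsupp.lsubtypeDomain S ∘ₗ (coeffs p).toLinearMap ∘ₗ (homComponent p n).subtype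
  have hker : LinearMap.ker φ =
      (twoSidedSpan p (mono p '' G)).comap (homComponent p n).subtype := by
    ext ⟨x, hx⟩
    rw [LinearMap.mem_ker, Submodule.mem_comap, mem_twoSidedSpan_image_mono_iff]
    change Finsupp.subtypeDomain _ _ = 0 ↔ _
    rw [Finsupp.subtypeDomain_eq_zero_iff']
    refine ⟨fun h w hw => ?_, fun h w hw => h w hw.1⟩
    by_cases hlen : w.toList.length = n
    · exact h w ⟨hw, hlen⟩
    · exact coeff_eq_zero_of_mem_homComponent p hx hlen
  have hsurj : Function.Surjective φ := by
    intro f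
    refine ⟨⟨(coeffs p).symm (Finsupp.embDomain (Function.Embedding.subtype _) f), ?_⟩, ?_⟩
    · rw [homComponent_eq_comap_supported, Submodule.mem_comap, LinearEquiv.coe_coe,
        LinearEquiv.apply_symm_apply, Finsupp.mem_supported, Finsupp.support_embDomain,
        Finset.coe_map]
      rintro _ ⟨w, -, rfl⟩
      exact w.2.2
    · ext w
      change Finsupp.subtypeDomain _ ((coeffs p) ((coeffs p).symm _)) w = f w
      rw [LinearEquiv.apply_symm_apply, Finsupp.subtypeDomain_apply]
      exact Finsupp.embDomain_apply_self _ f w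
  rw [bcoef, ← hker, (φ.quotKerEquivOfSurjective hsurj).finrank_eq, Module.finrank_finsupp_self,
    ← Nat.card_eq_fintype_card, Nat.card_coe_set_eq]
  exact Set.ncard_preimage_of_injective_subset_range (s := {w ∈ {w | Avoids G w} | w.length = n})
    FreeMonoid.toList.injective (by simp)

end LinearAlgebra

end MonomialAlgebra

/-- (Section 2.1 example, Poincaré series.)  Let `C` be the two-sided ideal of
`A = 𝔽_p⟨X_1, …, X_5⟩` generated by `X_5X_1, X_5X_2, X_4X_3, X_4X_2, X_5X_3` and
`X_5 X_4^n X_1` for all `n ≥ 1`.  With `b n = dim_{𝔽_p}(A^{(n)}/(C ∩ A^{(n)}))`, one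
has `(∑ b_n t^n) · (1 − 5t + 5t² + ∑_{k ≥ 3} t^k) = 1` in `ℤ⟦t⟧`; equivalently, the
Poincaré series of `A/C` is `(1 − 5t + 5t² + t³(1 + t + t² + ⋯))⁻¹`. -/
theorem stmt_13 (p : ℕ) (hp : p.Prime) :
    (PowerSeries.mk fun n =>
        (bcoef p (twoSidedSpan p
          (({mono p [4, 0], mono p [4, 1], mono p [3, 2], mono p [3, 1], mono p [4, 2]} :
              Set (FA p)) ∪
            {x | ∃ n : ℕ, 0 < n ∧ x = mono p (4 :: (List.replicate n 3 ++ [0]))})) n : ℤ)) *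
      (1 - 5 * PowerSeries.X + 5 * PowerSeries.X ^ 2 +
        PowerSeries.mk fun k => if 3 ≤ k then 1 else 0) = 1 := by
  have : Fact (1 < p) := ⟨hp.one_lt⟩
  rw [← MonomialAlgebra.image_mono_obstructions]
  have hseries := MonomialAlgebra.lengthSeries_avoids_mul
    MonomialAlgebra.nil_notMem_obstructions MonomialAlgebra.isFactorAntichain_obstructions
    MonomialAlgebra.isEndMarked_obstructions.hasNoOverlaps
  rw [MonomialAlgebra.lengthSeries_obstructions, Nat.card_fin] at hseries
  convert hseries using 2
  · ext n
    simp [MonomialAlgebra.lengthSeries, MonomialAlgebra.bcoef_twoSidedSpan_image_mono]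
  · push_cast
    ring
end
end
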